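/- (Perturbation bound for the weighted total least squares estimator.) Let A be a real symmetric positive definite p×p matrix with λ_min(ZᵀAZ) > λ_min(WᵀAW) (so that β̂(A) is well defined), let B be a real symmetric p×p matrix, and suppose Δ̂ := Δ̂(B,A) < 1. Then B is positive definite, β̂(B) is well defined, and ‖β̂(B) − β̂(A)‖ ≤ (2Δ̂/(1−Δ̂)) · UB(A). -/

import Mathlib

/-!
Write `E = B - A`, `e = ‖A⁻¹‖ ‖E‖` and `g = λ_min(ZᵀAZ) - λ_min(WᵀAW)`. Since
`‖x‖² ≤ ‖A⁻¹‖ xᵀAx`, every matrix `M` satisfies `‖M‖² ≤ ‖A⁻¹‖ λ_max(MᵀAM)`, hence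
`‖MᵀEM‖ ≤ e λ_max(MᵀAM)`. For `M = Z` directly, and for `M = W` through Weyl's inequality for the
smallest eigenvalue, this gives `‖γ(B) - γ(A)‖ ≤ e (λ_max(ZᵀAZ) + λ_max(WᵀAW)) = Δ̂ g`. As the
quadratic form of `γ(A)` is bounded below by `g`, that of `γ(B)` is bounded below by `(1 - Δ̂) g`,
so `γ(B)` is invertible, and the identity
`γ(B) (β̂(B) - β̂(A)) = (δ(B) - δ(A)) - (γ(B) - γ(A)) β̂(A)`, together with
`‖δ(B) - δ(A)‖ ≤ e g UB(A)` and `‖β̂(A)‖ ≤ UB(A)` (Cauchy–Schwarz for the inner product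
`xᵀAy`), yields `(1 - Δ̂) g ‖β̂(B) - β̂(A)‖ ≤ 2 Δ̂ g UB(A)`.
-/

open Matrix

/-- The spectral norm (operator 2-norm) of a real matrix. -/
noncomputable def spec {m n : ℕ} (M : Matrix (Fin m) (Fin n) ℝ) : ℝ :=
  ‖LinearMap.toContinuousLinearMap (Matrix.toEuclideanLin M)‖

/-- The smallest (real) eigenvalue of a square real matrix: `sInf` of its real spectrum.
For a symmetric matrix this is the smallest eigenvalue. -/
noncomputable def lmin {n : ℕ} (M : Matrix (Fin n) (Fin n) ℝ) : ℝ :=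
  sInf (spectrum ℝ M)

/-- The largest (real) eigenvalue of a square real matrix: `sSup` of its real spectrum. -/
noncomputable def lmax {n : ℕ} (M : Matrix (Fin n) (Fin n) ℝ) : ℝ :=
  sSup (spectrum ℝ M)

/-- The Euclidean norm of a vector in `ℝ^n`. -/
noncomputable def vnorm {n : ℕ} (v : Fin n → ℝ) : ℝ :=
  Real.sqrt (∑ i, (v i) ^ 2)

/-- `W = (Z, y)`: the `p × (m+1)` matrix obtained by appending `y` as a last column to `Z`. -/
def appendCol {p m : ℕ} (Z : Matrix (Fin p) (Fin m) ℝ) (y : Fin p → ℝ) :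
    Matrix (Fin p) (Fin (m + 1)) ℝ :=
  Matrix.of fun i j => Fin.lastCases (y i) (fun k => Z i k) j

/-- `γ(A) = ZᵀAZ − λ_min(WᵀAW)·I_m`. -/
noncomputable def gam {p m : ℕ} (Z : Matrix (Fin p) (Fin m) ℝ) (y : Fin p → ℝ)
    (A : Matrix (Fin p) (Fin p) ℝ) : Matrix (Fin m) (Fin m) ℝ :=
  Zᵀ * A * Z - lmin ((appendCol Z y)ᵀ * A * appendCol Z y) • (1 : Matrix (Fin m) (Fin m) ℝ)

/-- `δ(A) = ZᵀAy`. -/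
noncomputable def del {p m : ℕ} (Z : Matrix (Fin p) (Fin m) ℝ) (y : Fin p → ℝ)
    (A : Matrix (Fin p) (Fin p) ℝ) : Fin m → ℝ :=
  (Zᵀ * A) *ᵥ y

/-- The weighted total least squares estimator `β̂(A) = γ(A)⁻¹ δ(A)`. -/
noncomputable def betahat {p m : ℕ} (Z : Matrix (Fin p) (Fin m) ℝ) (y : Fin p → ℝ)
    (A : Matrix (Fin p) (Fin p) ℝ) : Fin m → ℝ :=
  (gam Z y A)⁻¹ *ᵥ del Z y A

/-- `Δ̂(B,A) = [(λ_max(ZᵀAZ) + λ_max(WᵀAW))/(λ_min(ZᵀAZ) − λ_min(WᵀAW))] · ‖A⁻¹‖·‖B−A‖`. -/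
noncomputable def Deltahat {p m : ℕ} (Z : Matrix (Fin p) (Fin m) ℝ) (y : Fin p → ℝ)
    (A B : Matrix (Fin p) (Fin p) ℝ) : ℝ :=
  (lmax (Zᵀ * A * Z) + lmax ((appendCol Z y)ᵀ * A * appendCol Z y)) /
      (lmin (Zᵀ * A * Z) - lmin ((appendCol Z y)ᵀ * A * appendCol Z y)) *
    (spec A⁻¹ * spec (B - A))

/-- `UB(A) = λ_max(ZᵀAZ)^{1/2}·(yᵀAy)^{1/2}/(λ_min(ZᵀAZ) − λ_min(WᵀAW))`. -/
noncomputable def UB {p m : ℕ} (Z : Matrix (Fin p) (Fin m) ℝ) (y : Fin p → ℝ)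
    (A : Matrix (Fin p) (Fin p) ℝ) : ℝ :=
  Real.sqrt (lmax (Zᵀ * A * Z)) * Real.sqrt (y ⬝ᵥ A *ᵥ y) /
    (lmin (Zᵀ * A * Z) - lmin ((appendCol Z y)ᵀ * A * appendCol Z y))

open scoped Matrix.Norms.L2Operator MatrixOrder

section Euclidean

variable {k n : ℕ}

lemma spec_eq_norm (M : Matrix (Fin k) (Fin n) ℝ) : spec M = ‖M‖ := rfl

lemma vnorm_eq_norm (v : Fin n → ℝ) : vnorm v = ‖WithLp.toLp 2 v‖ := by
  simp [vnorm, EuclideanSpace.norm_eq]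

lemma vnorm_nonneg (v : Fin n → ℝ) : 0 ≤ vnorm v := Real.sqrt_nonneg _

lemma vnorm_sq (v : Fin n → ℝ) : vnorm v ^ 2 = v ⬝ᵥ v := by
  rw [vnorm_eq_norm, ← real_inner_self_eq_norm_sq, EuclideanSpace.inner_toLp_toLp]
  simp

lemma vnorm_eq_sqrt (v : Fin n → ℝ) : vnorm v = √(v ⬝ᵥ v) := by
  rw [← vnorm_sq, Real.sqrt_sq (vnorm_nonneg v)]

lemma dotProduct_self_nonneg (v : Fin n → ℝ) : 0 ≤ v ⬝ᵥ v := vnorm_sq v ▸ sq_nonneg _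

lemma vnorm_eq_zero {v : Fin n → ℝ} : vnorm v = 0 ↔ v = 0 := by
  simp [vnorm_eq_norm]

lemma abs_dotProduct_le (v w : Fin n → ℝ) : |v ⬝ᵥ w| ≤ vnorm v * vnorm w := by
  rw [vnorm_eq_norm, vnorm_eq_norm, dotProduct_comm]
  exact abs_real_inner_le_norm (WithLp.toLp 2 v) (WithLp.toLp 2 w)

lemma vnorm_sub_le (v w : Fin n → ℝ) : vnorm (v - w) ≤ vnorm v + vnorm w := by
  simpa only [vnorm_eq_norm, WithLp.toLp_sub] using norm_sub_le _ _

lemma vnorm_smul (c : ℝ) (v : Fin n → ℝ) : vnorm (c • v) = |c| * vnorm v := by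
  simp only [vnorm_eq_norm, WithLp.toLp_smul, norm_smul, Real.norm_eq_abs]

lemma spec_nonneg (M : Matrix (Fin k) (Fin n) ℝ) : 0 ≤ spec M := norm_nonneg _

lemma vnorm_mulVec_le (M : Matrix (Fin k) (Fin n) ℝ) (v : Fin n → ℝ) :
    vnorm (M *ᵥ v) ≤ spec M * vnorm v := by
  rw [vnorm_eq_norm, vnorm_eq_norm]
  exact M.l2_opNorm_mulVec (WithLp.toLp 2 v)

lemma spec_le_of_vnorm_mulVec_le {M : Matrix (Fin k) (Fin n) ℝ} {c : ℝ} (hc : 0 ≤ c)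
    (h : ∀ v, vnorm (M *ᵥ v) ≤ c * vnorm v) : spec M ≤ c :=
  ContinuousLinearMap.opNorm_le_bound _ hc fun v => by
    have hv := h v.ofLp
    rwa [vnorm_eq_norm, vnorm_eq_norm] at hv

lemma spec_transpose (M : Matrix (Fin k) (Fin n) ℝ) : spec Mᵀ = spec M := by
  simpa only [spec_eq_norm, conjTranspose_eq_transpose_of_trivial] using
    M.l2_opNorm_conjTranspose

lemma spec_mul_le {l : ℕ} (M : Matrix (Fin k) (Fin n) ℝ) (N : Matrix (Fin n) (Fin l) ℝ) :
    spec (M * N) ≤ spec M * spec N :=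
  M.l2_opNorm_mul N

lemma abs_dotProduct_mulVec_le (M : Matrix (Fin n) (Fin n) ℝ) (x : Fin n → ℝ) :
    |x ⬝ᵥ M *ᵥ x| ≤ spec M * (x ⬝ᵥ x) := by
  calc |x ⬝ᵥ M *ᵥ x| ≤ vnorm x * (spec M * vnorm x) :=
        (abs_dotProduct_le _ _).trans
          (mul_le_mul_of_nonneg_left (vnorm_mulVec_le M x) (vnorm_nonneg x))
    _ = spec M * (x ⬝ᵥ x) := by rw [← vnorm_sq]; ring

lemma spec_sub_smul_one_le (S : Matrix (Fin n) (Fin n) ℝ) (c : ℝ) :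
    spec (S - c • 1) ≤ spec S + |c| :=
  spec_le_of_vnorm_mulVec_le (add_nonneg (spec_nonneg S) (abs_nonneg c)) fun v => by
    rw [sub_mulVec, smul_mulVec, one_mulVec, add_mul]
    exact (vnorm_sub_le _ _).trans
      (add_le_add (vnorm_mulVec_le S v) (vnorm_smul c v).le)

end Euclidean

namespace Matrix

variable {k : ℕ} {M : Matrix (Fin k) (Fin k) ℝ}

lemma algebraMap_le_iff_forall_dotProduct (hM : M.IsHermitian) {r : ℝ} :
    algebraMap ℝ _ r ≤ M ↔ ∀ x, r * (x ⬝ᵥ x) ≤ x ⬝ᵥ M *ᵥ x := by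
  rw [Matrix.le_iff, posSemidef_iff_dotProduct_mulVec]
  simp [(isHermitian_iff_isSymm.1 hM).sub (isSymm_one.smul r), sub_mulVec,
    Algebra.algebraMap_eq_smul_one, smul_mulVec]

lemma le_algebraMap_iff_forall_dotProduct (hM : M.IsHermitian) {r : ℝ} :
    M ≤ algebraMap ℝ _ r ↔ ∀ x, x ⬝ᵥ M *ᵥ x ≤ r * (x ⬝ᵥ x) := by
  rw [Matrix.le_iff, posSemidef_iff_dotProduct_mulVec]
  simp [(isSymm_one.smul r).sub (isHermitian_iff_isSymm.1 hM), sub_mulVec,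
    Algebra.algebraMap_eq_smul_one, smul_mulVec]

lemma lmin_mul_dotProduct_self_le (hM : M.IsHermitian) (x : Fin k → ℝ) :
    lmin M * (x ⬝ᵥ x) ≤ x ⬝ᵥ M *ᵥ x :=
  (algebraMap_le_iff_forall_dotProduct hM).1
    ((algebraMap_le_iff_le_spectrum hM).2 fun _ hr =>
      csInf_le finite_real_spectrum.bddBelow hr) x

lemma dotProduct_mulVec_le_lmax_mul (hM : M.IsHermitian) (x : Fin k → ℝ) :
    x ⬝ᵥ M *ᵥ x ≤ lmax M * (x ⬝ᵥ x) :=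
  (le_algebraMap_iff_forall_dotProduct hM).1
    ((le_algebraMap_iff_spectrum_le hM).2 fun _ hr =>
      le_csSup finite_real_spectrum.bddAbove hr) x

lemma le_lmin_of_forall [NeZero k] (hM : M.IsHermitian) {r : ℝ}
    (h : ∀ x, r * (x ⬝ᵥ x) ≤ x ⬝ᵥ M *ᵥ x) : r ≤ lmin M :=
  le_csInf ⟨_, hM.eigenvalues_mem_spectrum_real 0⟩
    ((algebraMap_le_iff_le_spectrum hM).1 ((algebraMap_le_iff_forall_dotProduct hM).2 h))

lemma lmin_le_lmax (M : Matrix (Fin k) (Fin k) ℝ) : lmin M ≤ lmax M :=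
  Real.sInf_le_sSup _ finite_real_spectrum.bddBelow finite_real_spectrum.bddAbove

lemma PosSemidef.lmin_nonneg (hM : M.PosSemidef) : 0 ≤ lmin M :=
  Real.sInf_nonneg fun r hr => by
    rw [hM.1.spectrum_real_eq_range_eigenvalues] at hr
    obtain ⟨i, rfl⟩ := hr
    exact hM.eigenvalues_nonneg i

lemma PosSemidef.lmax_nonneg (hM : M.PosSemidef) : 0 ≤ lmax M :=
  hM.lmin_nonneg.trans (lmin_le_lmax M)

lemma abs_lmin_sub_le [NeZero k] {P Q : Matrix (Fin k) (Fin k) ℝ} (hP : P.IsHermitian)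
    (hQ : Q.IsHermitian) {K : ℝ} (h : ∀ x, |x ⬝ᵥ (Q - P) *ᵥ x| ≤ K * (x ⬝ᵥ x)) :
    |lmin Q - lmin P| ≤ K := by
  have hQP : ∀ x, x ⬝ᵥ (Q - P) *ᵥ x = x ⬝ᵥ Q *ᵥ x - x ⬝ᵥ P *ᵥ x := fun x => by
    rw [sub_mulVec, dotProduct_sub]
  rw [abs_sub_le_iff]
  constructor
  · have := le_lmin_of_forall hP (r := lmin Q - K) fun x => by
      linarith [lmin_mul_dotProduct_self_le hQ x, hQP x, (abs_le.1 (h x)).2]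
    linarith
  · have := le_lmin_of_forall hQ (r := lmin P - K) fun x => by
      linarith [lmin_mul_dotProduct_self_le hP x, hQP x, (abs_le.1 (h x)).1]
    linarith

variable {p : ℕ} {A B : Matrix (Fin p) (Fin p) ℝ}

lemma dotProduct_transpose_mul_mul_mulVec (M : Matrix (Fin p) (Fin k) ℝ)
    (C : Matrix (Fin p) (Fin p) ℝ) (x : Fin k → ℝ) :
    x ⬝ᵥ (Mᵀ * C * M) *ᵥ x = M *ᵥ x ⬝ᵥ C *ᵥ (M *ᵥ x) := by
  rw [← mulVec_mulVec, ← mulVec_mulVec, dotProduct_mulVec, vecMul_transpose]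

lemma PosSemidef.transpose_mul_mul_same (hA : A.PosSemidef) (M : Matrix (Fin p) (Fin k) ℝ) :
    (Mᵀ * A * M).PosSemidef := by
  simpa only [conjTranspose_eq_transpose_of_trivial] using hA.conjTranspose_mul_mul_same M

lemma IsHermitian.transpose_mul_mul_same (hA : A.IsHermitian) (M : Matrix (Fin p) (Fin k) ℝ) :
    (Mᵀ * A * M).IsHermitian := by
  simpa only [conjTranspose_eq_transpose_of_trivial] using isHermitian_conjTranspose_mul_mul M hA

lemma PosSemidef.dotProduct_mulVec_nonneg' (hA : A.PosSemidef) (x : Fin p → ℝ) :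
    0 ≤ x ⬝ᵥ A *ᵥ x := by
  simpa using hA.dotProduct_mulVec_nonneg x

lemma PosSemidef.dotProduct_mulVec_le_sqrt (hA : A.PosSemidef) (x y : Fin p → ℝ) :
    x ⬝ᵥ A *ᵥ y ≤ √(x ⬝ᵥ A *ᵥ x) * √(y ⬝ᵥ A *ᵥ y) := by
  obtain ⟨S, rfl⟩ := CStarAlgebra.nonneg_iff_eq_star_mul_self.mp hA.nonneg
  have hS : ∀ u v, u ⬝ᵥ (star S * S) *ᵥ v = S *ᵥ u ⬝ᵥ S *ᵥ v := fun u v => by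
    rw [star_eq_conjTranspose, conjTranspose_eq_transpose_of_trivial, ← mulVec_mulVec,
      dotProduct_mulVec, vecMul_transpose]
  rw [hS, hS, hS, ← vnorm_eq_sqrt, ← vnorm_eq_sqrt]
  exact (le_abs_self _).trans (abs_dotProduct_le _ _)

lemma PosDef.dotProduct_self_le (hA : A.PosDef) (x : Fin p → ℝ) :
    x ⬝ᵥ x ≤ spec A⁻¹ * (x ⬝ᵥ A *ᵥ x) := by
  have hAx := hA.posSemidef.dotProduct_mulVec_nonneg' x
  have hinv : A *ᵥ (A⁻¹ *ᵥ x) = x := by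
    rw [mulVec_mulVec, mul_nonsing_inv _ hA.det_pos.ne'.isUnit, one_mulVec]
  have hcs : x ⬝ᵥ x ≤ √(x ⬝ᵥ A *ᵥ x) * √(x ⬝ᵥ A⁻¹ *ᵥ x) := by
    simpa only [hinv, dotProduct_comm (A⁻¹ *ᵥ x) x] using
      hA.posSemidef.dotProduct_mulVec_le_sqrt x (A⁻¹ *ᵥ x)
  have hinvx : x ⬝ᵥ A⁻¹ *ᵥ x ≤ spec A⁻¹ * (x ⬝ᵥ x) :=
    (le_abs_self _).trans (abs_dotProduct_mulVec_le _ _)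
  rcases (dotProduct_self_nonneg x).eq_or_lt with hx | hx
  · rw [← hx]
    exact mul_nonneg (spec_nonneg _) hAx
  · refine le_of_mul_le_mul_right ?_ hx
    calc x ⬝ᵥ x * x ⬝ᵥ x ≤ (√(x ⬝ᵥ A *ᵥ x) * √(x ⬝ᵥ A⁻¹ *ᵥ x)) ^ 2 := by
          rw [← sq]; exact pow_le_pow_left₀ hx.le hcs 2
      _ ≤ (x ⬝ᵥ A *ᵥ x) * (spec A⁻¹ * (x ⬝ᵥ x)) := by
          rw [mul_pow, Real.sq_sqrt hAx,
            Real.sq_sqrt (hA.inv.posSemidef.dotProduct_mulVec_nonneg' x)]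
          exact mul_le_mul_of_nonneg_left hinvx hAx
      _ = _ := by ring


lemma PosDef.spec_le_sqrt (hA : A.PosDef) (M : Matrix (Fin p) (Fin k) ℝ) :
    spec M ≤ √(spec A⁻¹ * lmax (Mᵀ * A * M)) := by
  have hMAM := hA.posSemidef.transpose_mul_mul_same M
  have hc : 0 ≤ spec A⁻¹ * lmax (Mᵀ * A * M) :=
    mul_nonneg (spec_nonneg _) hMAM.lmax_nonneg
  refine spec_le_of_vnorm_mulVec_le (Real.sqrt_nonneg _) fun v => ?_
  rw [vnorm_eq_sqrt, vnorm_eq_sqrt, ← Real.sqrt_mul hc]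
  refine Real.sqrt_le_sqrt ?_
  calc M *ᵥ v ⬝ᵥ M *ᵥ v ≤ spec A⁻¹ * (M *ᵥ v ⬝ᵥ A *ᵥ (M *ᵥ v)) := hA.dotProduct_self_le _
    _ = spec A⁻¹ * (v ⬝ᵥ (Mᵀ * A * M) *ᵥ v) := by rw [dotProduct_transpose_mul_mul_mulVec]
    _ ≤ spec A⁻¹ * (lmax (Mᵀ * A * M) * (v ⬝ᵥ v)) :=
        mul_le_mul_of_nonneg_left (dotProduct_mulVec_le_lmax_mul hMAM.1 v) (spec_nonneg _)
    _ = _ := by ring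

lemma PosDef.spec_transpose_mul_mul_le (hA : A.PosDef) (E : Matrix (Fin p) (Fin p) ℝ)
    (M : Matrix (Fin p) (Fin k) ℝ) :
    spec (Mᵀ * E * M) ≤ spec A⁻¹ * spec E * lmax (Mᵀ * A * M) := by
  have hM : spec M * spec M ≤ spec A⁻¹ * lmax (Mᵀ * A * M) := by
    have h := mul_self_le_mul_self (spec_nonneg M) (hA.spec_le_sqrt M)
    rwa [Real.mul_self_sqrt (mul_nonneg (spec_nonneg _)
      (hA.posSemidef.transpose_mul_mul_same M).lmax_nonneg)] at h
  calc spec (Mᵀ * E * M) ≤ spec M * spec E * spec M := by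
        refine (spec_mul_le _ _).trans (mul_le_mul_of_nonneg_right ?_ (spec_nonneg M))
        exact (spec_mul_le _ _).trans_eq (by rw [spec_transpose])
    _ = spec E * (spec M * spec M) := by ring
    _ ≤ spec E * (spec A⁻¹ * lmax (Mᵀ * A * M)) := mul_le_mul_of_nonneg_left hM (spec_nonneg E)
    _ = _ := by ring

lemma PosDef.of_spec_inv_mul_spec_sub_lt_one (hA : A.PosDef) (hB : B.IsSymm)
    (h : spec A⁻¹ * spec (B - A) < 1) : B.PosDef := by
  refine PosDef.of_dotProduct_mulVec_pos (isHermitian_iff_isSymm.2 hB) fun x hx => ?_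
  have hAx : 0 < x ⬝ᵥ A *ᵥ x := by simpa using hA.dotProduct_mulVec_pos hx
  have hE := (abs_le.1 (abs_dotProduct_mulVec_le (B - A) x)).1
  have hx := mul_le_mul_of_nonneg_left (hA.dotProduct_self_le x) (spec_nonneg (B - A))
  rw [sub_mulVec, dotProduct_sub] at hE
  simp only [star_trivial]
  linarith [mul_pos (sub_pos.2 h) hAx]

lemma PosDef.abs_lmin_transpose_mul_mul_sub_le [NeZero k] (hA : A.PosDef) (hB : B.IsSymm)
    (M : Matrix (Fin p) (Fin k) ℝ) :
    |lmin (Mᵀ * B * M) - lmin (Mᵀ * A * M)| ≤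
      spec A⁻¹ * spec (B - A) * lmax (Mᵀ * A * M) := by
  refine abs_lmin_sub_le (hA.1.transpose_mul_mul_same M)
    ((isHermitian_iff_isSymm.2 hB).transpose_mul_mul_same M) fun x => ?_
  rw [← Matrix.sub_mul, ← Matrix.mul_sub]
  exact (abs_dotProduct_mulVec_le _ x).trans
    (mul_le_mul_of_nonneg_right (hA.spec_transpose_mul_mul_le _ M)
      (dotProduct_self_nonneg x))

end Matrix

section Coercive

variable {k : ℕ} {G G' : Matrix (Fin k) (Fin k) ℝ} {c : ℝ}

lemma mul_vnorm_le_vnorm_mulVec (h : ∀ x, c * (x ⬝ᵥ x) ≤ x ⬝ᵥ G *ᵥ x) (x : Fin k → ℝ) :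
    c * vnorm x ≤ vnorm (G *ᵥ x) := by
  rcases (vnorm_nonneg x).eq_or_lt with hx | hx
  · rw [← hx, mul_zero]
    exact vnorm_nonneg _
  · refine le_of_mul_le_mul_right ?_ hx
    calc c * vnorm x * vnorm x = c * (x ⬝ᵥ x) := by rw [← vnorm_sq]; ring
      _ ≤ x ⬝ᵥ G *ᵥ x := h x
      _ ≤ vnorm x * vnorm (G *ᵥ x) := (le_abs_self _).trans (abs_dotProduct_le _ _)
      _ = vnorm (G *ᵥ x) * vnorm x := mul_comm _ _

lemma isUnit_det_of_coercive (hc : 0 < c) (h : ∀ x, c * (x ⬝ᵥ x) ≤ x ⬝ᵥ G *ᵥ x) :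
    IsUnit G.det := by
  rw [← isUnit_iff_isUnit_det, ← mulVec_injective_iff_isUnit]
  intro x y hxy
  have hle := mul_vnorm_le_vnorm_mulVec h (x - y)
  rw [mulVec_sub, hxy, sub_self, vnorm_eq_zero.2 rfl, ← mul_zero c] at hle
  exact sub_eq_zero.1 (vnorm_eq_zero.1 ((le_of_mul_le_mul_left hle hc).antisymm (vnorm_nonneg _)))

lemma coercive_of_spec_sub_le {s : ℝ} (h : ∀ x, c * (x ⬝ᵥ x) ≤ x ⬝ᵥ G *ᵥ x)
    (hs : spec (G' - G) ≤ s) (x : Fin k → ℝ) : (c - s) * (x ⬝ᵥ x) ≤ x ⬝ᵥ G' *ᵥ x := by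
  have hG := (abs_le.1 (abs_dotProduct_mulVec_le (G' - G) x)).1
  rw [sub_mulVec, dotProduct_sub] at hG
  linarith [h x, mul_le_mul_of_nonneg_right hs (dotProduct_self_nonneg x)]

lemma mul_vnorm_sub_le_of_coercive (h : ∀ x, c * (x ⬝ᵥ x) ≤ x ⬝ᵥ G' *ᵥ x) (b b' : Fin k → ℝ) :
    c * vnorm (b' - b) ≤ vnorm (G' *ᵥ b' - G *ᵥ b) + spec (G' - G) * vnorm b := by
  have hsplit : G' *ᵥ (b' - b) = (G' *ᵥ b' - G *ᵥ b) - (G' - G) *ᵥ b := by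
    rw [mulVec_sub, sub_mulVec]; abel
  calc c * vnorm (b' - b) ≤ vnorm (G' *ᵥ (b' - b)) := mul_vnorm_le_vnorm_mulVec h _
    _ ≤ _ := by
        rw [hsplit]
        exact (vnorm_sub_le _ _).trans (add_le_add le_rfl (vnorm_mulVec_le _ _))

end Coercive

section WeightedTotalLeastSquares

variable {p m : ℕ} (Z : Matrix (Fin p) (Fin m) ℝ) (y : Fin p → ℝ)
  {A B : Matrix (Fin p) (Fin p) ℝ}

lemma gam_sub_gam : gam Z y B - gam Z y A = Zᵀ * (B - A) * Z -
    (lmin ((appendCol Z y)ᵀ * B * appendCol Z y) -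
      lmin ((appendCol Z y)ᵀ * A * appendCol Z y)) • 1 := by
  simp only [gam, Matrix.mul_sub, Matrix.sub_mul, sub_smul]
  abel

lemma mulVec_betahat (h : IsUnit (gam Z y A).det) : gam Z y A *ᵥ betahat Z y A = del Z y A := by
  rw [betahat, mulVec_mulVec, mul_nonsing_inv _ h, one_mulVec]

lemma gap_mul_le_gam (hA : A.IsHermitian) (x : Fin m → ℝ) :
    (lmin (Zᵀ * A * Z) - lmin ((appendCol Z y)ᵀ * A * appendCol Z y)) * (x ⬝ᵥ x) ≤
      x ⬝ᵥ gam Z y A *ᵥ x := by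
  rw [gam, sub_mulVec, dotProduct_sub, smul_mulVec, one_mulVec, dotProduct_smul, smul_eq_mul,
    sub_mul]
  exact sub_le_sub_right (lmin_mul_dotProduct_self_le (hA.transpose_mul_mul_same Z) x) _

lemma spec_gam_sub_le (hA : A.PosDef) (hB : B.IsSymm) :
    spec (gam Z y B - gam Z y A) ≤ spec A⁻¹ * spec (B - A) *
      (lmax (Zᵀ * A * Z) + lmax ((appendCol Z y)ᵀ * A * appendCol Z y)) := by
  rw [gam_sub_gam, mul_add]
  exact (spec_sub_smul_one_le _ _).trans (add_le_add (hA.spec_transpose_mul_mul_le _ Z)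
    (hA.abs_lmin_transpose_mul_mul_sub_le hB (appendCol Z y)))

lemma vnorm_del_sub_le (hA : A.PosDef) :
    vnorm (del Z y B - del Z y A) ≤
      spec A⁻¹ * spec (B - A) * (√(lmax (Zᵀ * A * Z)) * √(y ⬝ᵥ A *ᵥ y)) := by
  have hdel : del Z y B - del Z y A = Zᵀ *ᵥ ((B - A) *ᵥ y) := by
    rw [del, del, ← sub_mulVec, ← Matrix.mul_sub, ← mulVec_mulVec]
  have hy : vnorm y ≤ √(spec A⁻¹) * √(y ⬝ᵥ A *ᵥ y) := by
    rw [vnorm_eq_sqrt, ← Real.sqrt_mul (spec_nonneg _)]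
    exact Real.sqrt_le_sqrt (hA.dotProduct_self_le y)
  have hZ : spec Zᵀ ≤ √(spec A⁻¹) * √(lmax (Zᵀ * A * Z)) := by
    rw [spec_transpose, ← Real.sqrt_mul (spec_nonneg _)]
    exact hA.spec_le_sqrt Z
  have hBA := spec_nonneg (B - A)
  rw [hdel]
  calc vnorm (Zᵀ *ᵥ ((B - A) *ᵥ y)) ≤ spec Zᵀ * (spec (B - A) * vnorm y) :=
        (vnorm_mulVec_le _ _).trans
          (mul_le_mul_of_nonneg_left (vnorm_mulVec_le _ _) (spec_nonneg _))
    _ ≤ (√(spec A⁻¹) * √(lmax (Zᵀ * A * Z))) *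
          (spec (B - A) * (√(spec A⁻¹) * √(y ⬝ᵥ A *ᵥ y))) := by
        have := vnorm_nonneg y
        gcongr
    _ = _ := by
        linear_combination √(lmax (Zᵀ * A * Z)) * spec (B - A) * √(y ⬝ᵥ A *ᵥ y) *
          Real.mul_self_sqrt (spec_nonneg A⁻¹)

lemma vnorm_betahat_le (hA : A.PosDef)
    (hgap : lmin ((appendCol Z y)ᵀ * A * appendCol Z y) < lmin (Zᵀ * A * Z)) :
    vnorm (betahat Z y A) ≤ UB Z y A := by
  set b := betahat Z y A
  set g := lmin (Zᵀ * A * Z) - lmin ((appendCol Z y)ᵀ * A * appendCol Z y)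
  have hg : 0 < g := sub_pos.2 hgap
  have hsolve := mulVec_betahat Z y (isUnit_det_of_coercive hg (gap_mul_le_gam Z y hA.1))
  have hZAZ := hA.posSemidef.transpose_mul_mul_same Z
  have key : g * vnorm b * vnorm b ≤ √(lmax (Zᵀ * A * Z)) * √(y ⬝ᵥ A *ᵥ y) * vnorm b := by
    calc g * vnorm b * vnorm b = g * (b ⬝ᵥ b) := by rw [mul_assoc, ← sq, vnorm_sq]
      _ ≤ b ⬝ᵥ gam Z y A *ᵥ b := gap_mul_le_gam Z y hA.1 b
      _ = Z *ᵥ b ⬝ᵥ A *ᵥ y := by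
          rw [hsolve, del, ← mulVec_mulVec, dotProduct_mulVec, vecMul_transpose]
      _ ≤ √(Z *ᵥ b ⬝ᵥ A *ᵥ (Z *ᵥ b)) * √(y ⬝ᵥ A *ᵥ y) :=
          hA.posSemidef.dotProduct_mulVec_le_sqrt _ _
      _ ≤ √(lmax (Zᵀ * A * Z) * (b ⬝ᵥ b)) * √(y ⬝ᵥ A *ᵥ y) := by
          rw [← dotProduct_transpose_mul_mul_mulVec]
          gcongr
          exact dotProduct_mulVec_le_lmax_mul hZAZ.1 b
      _ = _ := by rw [Real.sqrt_mul hZAZ.lmax_nonneg, ← vnorm_eq_sqrt]; ring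
  rw [UB, le_div_iff₀ hg]
  rcases (vnorm_nonneg b).eq_or_lt with hb | hb
  · rw [← hb, zero_mul]
    positivity
  · exact le_of_mul_le_mul_right (by linarith) hb

variable (B) in
lemma Deltahat_mul_gap
    (hgap : lmin ((appendCol Z y)ᵀ * A * appendCol Z y) < lmin (Zᵀ * A * Z)) :
    Deltahat Z y A B * (lmin (Zᵀ * A * Z) - lmin ((appendCol Z y)ᵀ * A * appendCol Z y)) =
      spec A⁻¹ * spec (B - A) *
        (lmax (Zᵀ * A * Z) + lmax ((appendCol Z y)ᵀ * A * appendCol Z y)) := by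
  rw [Deltahat]
  field_simp [(sub_pos.2 hgap).ne']

variable (B) in
lemma spec_mul_spec_le_Deltahat (hA : A.PosDef)
    (hgap : lmin ((appendCol Z y)ᵀ * A * appendCol Z y) < lmin (Zᵀ * A * Z)) :
    spec A⁻¹ * spec (B - A) ≤ Deltahat Z y A B := by
  have hWAW := hA.posSemidef.transpose_mul_mul_same (appendCol Z y)
  refine le_mul_of_one_le_left (mul_nonneg (spec_nonneg _) (spec_nonneg _))
    ((one_le_div (sub_pos.2 hgap)).2 ?_)
  linarith [lmin_le_lmax (Zᵀ * A * Z), hWAW.lmin_nonneg, hWAW.lmax_nonneg]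

end WeightedTotalLeastSquares

theorem stmt6_general {p m : ℕ}
    (Z : Matrix (Fin p) (Fin m) ℝ) (y : Fin p → ℝ)
    (A B : Matrix (Fin p) (Fin p) ℝ) (hA : A.PosDef) (hBsymm : B.IsSymm)
    (hgap : lmin ((appendCol Z y)ᵀ * A * appendCol Z y) < lmin (Zᵀ * A * Z))
    (hD : Deltahat Z y A B < 1) :
    B.PosDef ∧ IsUnit (gam Z y B).det ∧
      vnorm (betahat Z y B - betahat Z y A) ≤
        2 * Deltahat Z y A B / (1 - Deltahat Z y A B) * UB Z y A := by
  set g := lmin (Zᵀ * A * Z) - lmin ((appendCol Z y)ᵀ * A * appendCol Z y)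
  set Δ := Deltahat Z y A B
  have hg : 0 < g := sub_pos.2 hgap
  have he : spec A⁻¹ * spec (B - A) ≤ Δ := spec_mul_spec_le_Deltahat Z y B hA hgap
  have hΔ : 0 ≤ Δ := (mul_nonneg (spec_nonneg _) (spec_nonneg _)).trans he
  have hgam : spec (gam Z y B - gam Z y A) ≤ Δ * g :=
    (spec_gam_sub_le Z y hA hBsymm).trans_eq (Deltahat_mul_gap Z y B hgap).symm
  have hcoerA : ∀ x, g * (x ⬝ᵥ x) ≤ x ⬝ᵥ gam Z y A *ᵥ x := gap_mul_le_gam Z y hA.1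
  have hcoerB := coercive_of_spec_sub_le hcoerA hgam
  have hdetB := isUnit_det_of_coercive (by nlinarith) hcoerB
  refine ⟨hA.of_spec_inv_mul_spec_sub_lt_one hBsymm (he.trans_lt hD), hdetB, ?_⟩
  have hdiff := mul_vnorm_sub_le_of_coercive (G := gam Z y A) hcoerB
    (betahat Z y A) (betahat Z y B)
  rw [mulVec_betahat Z y hdetB, mulVec_betahat Z y (isUnit_det_of_coercive hg hcoerA)] at hdiff
  have hdel : vnorm (del Z y B - del Z y A) ≤ spec A⁻¹ * spec (B - A) * (g * UB Z y A) := by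
    rw [UB, mul_div_cancel₀ _ hg.ne']
    exact vnorm_del_sub_le Z y hA
  have hb := vnorm_betahat_le Z y hA hgap
  have hUB := (vnorm_nonneg _).trans hb
  rw [div_mul_eq_mul_div, le_div_iff₀ (sub_pos.2 hD)]
  refine le_of_mul_le_mul_right ?_ hg
  calc vnorm (betahat Z y B - betahat Z y A) * (1 - Δ) * g
      = (g - Δ * g) * vnorm (betahat Z y B - betahat Z y A) := by ring
    _ ≤ _ := hdiff
    _ ≤ Δ * (g * UB Z y A) + Δ * g * UB Z y A := by
        gcongr
        · exact hdel.trans (by gcongr)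
        · exact vnorm_nonneg _
    _ = 2 * Δ * UB Z y A * g := by ring

/-- Perturbation bound for the weighted total least squares estimator: if `A` is
symmetric positive definite with `λ_min(ZᵀAZ) > λ_min(WᵀAW)` (so `β̂(A)` is well
defined), `B` is symmetric, and `Δ̂ = Δ̂(B,A) < 1`, then `B` is positive definite,
`β̂(B)` is well defined, and `‖β̂(B) − β̂(A)‖ ≤ (2Δ̂/(1−Δ̂))·UB(A)`. -/
theorem stmt6 {p m : ℕ} (hp : 0 < p) (hm : 0 < m)
    (Z : Matrix (Fin p) (Fin m) ℝ) (y : Fin p → ℝ)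
    (A B : Matrix (Fin p) (Fin p) ℝ) (hA : A.PosDef) (hBsymm : B.IsSymm)
    (hgap : lmin ((appendCol Z y)ᵀ * A * appendCol Z y) < lmin (Zᵀ * A * Z))
    (hD : Deltahat Z y A B < 1) :
    B.PosDef ∧ IsUnit (gam Z y B).det ∧
      vnorm (betahat Z y B - betahat Z y A) ≤
        2 * Deltahat Z y A B / (1 - Deltahat Z y A B) * UB Z y A :=
  stmt6_general Z y A B hA hBsymm hgap hD
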